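/- Let F be a symmetric positive definite real d×d matrix, ε_KL > 0, θ ∈ ℝ^d, and β ∈ (0,1). Let J_r, J_c : ℝ^d → ℝ be differentiable with gradients g_r := ∇J_r(θ) and g_c := ∇J_c(θ) at θ, both gradients Lipschitz on the closed ball of radius M := max(‖δ_r‖, ‖δ_c‖) centred at θ. Suppose δ_r ∈ T maximizes δ ↦ ⟨g_r, δ⟩ over T, δ_c ∈ T minimizes δ ↦ ⟨g_c, δ⟩ over T, g_r ≠ 0, g_c ≠ 0, and ⟨g_r, δ_c⟩ ≥ 0. Set ε := −β·⟨g_c, δ_c⟩ and δ := (1−μ*)·δ_r + μ*·δ_c. Then there exists α ∈ (0,1] such that simultaneously J_c(θ + α·δ) < J_c(θ) and J_r(θ + α·δ) > J_r(θ). -/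

import Mathlib

/-!
The trust region contains a neighbourhood of `0`, so the maximiser `δ_r` of `⟨g_r, ·⟩`
and the minimiser `δ_c` of `⟨g_c, ·⟩` satisfy `⟨g_r, δ_r⟩ > 0` and `⟨g_c, δ_c⟩ < 0`.
With `ε = -β⟨g_c, δ_c⟩ > 0` the coefficient `μ*` lies in `[0, 1)` and is chosen so that
`⟨g_c, δ⟩ ≤ -ε < 0`, while `⟨g_r, δ⟩ = (1 - μ*)⟨g_r, δ_r⟩ + μ*⟨g_r, δ_c⟩ > 0`.
Hence `δ` is a first-order descent direction for `J_c` and ascent direction for `J_r`,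
and both strict inequalities hold for every small enough step `α > 0`.
-/

open RealInnerProductSpace

/-- The safety-biased coefficient `μ*` from the SB-TRPO update:
`μ* := (⟨g_c,δ_r⟩ + ε)/(⟨g_c,δ_r⟩ − ⟨g_c,δ_c⟩)` if
`⟨g_c,δ_c⟩ ≠ ⟨g_c,δ_r⟩` and `⟨g_c,δ_r⟩ ≥ −ε`, and `μ* := 0` otherwise. -/
noncomputable def mustar {d : ℕ} (gc δr δc : EuclideanSpace ℝ (Fin d)) (ε : ℝ) : ℝ :=
  if ⟪gc, δc⟫ ≠ ⟪gc, δr⟫ ∧ ⟪gc, δr⟫ ≥ -ε then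
    (⟪gc, δr⟫ + ε) / (⟪gc, δr⟫ - ⟪gc, δc⟫)
  else 0

open Filter Topology

section TrustRegion

variable {E : Type*} [NormedAddCommGroup E] [InnerProductSpace ℝ E]

theorem setOf_half_inner_le_mem_nhds_zero [FiniteDimensional ℝ E] (A : E →ₗ[ℝ] E)
    {ε : ℝ} (hε : 0 < ε) : {x : E | (1/2) * ⟪x, A x⟫ ≤ ε} ∈ 𝓝 0 := by
  have hA : Continuous A := A.continuous_of_finiteDimensional
  have hq : Continuous fun x : E => (1/2) * ⟪x, A x⟫ := by fun_prop
  exact hq.tendsto 0 (Iic_mem_nhds (by simpa using hε))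

theorem inner_pos_of_isMaxOn {s : Set E} (hs : s ∈ 𝓝 0) {g x : E} (hg : g ≠ 0)
    (hmax : IsMaxOn (⟪g, ·⟫) s x) : 0 < ⟪g, x⟫ := by
  have hline : Tendsto (fun t : ℝ => t • g) (𝓝 0) (𝓝 0) := by
    simpa using (show Continuous fun t : ℝ => t • g by fun_prop).tendsto 0
  obtain ⟨t, hts, ht⟩ :=
    (((hline.eventually_mem hs).filter_mono nhdsWithin_le_nhds).and
      (self_mem_nhdsWithin : ∀ᶠ t in 𝓝[>] (0 : ℝ), 0 < t)).exists
  calc 0 < t * ‖g‖ ^ 2 := mul_pos ht (by positivity)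
    _ = ⟪g, t • g⟫ := by rw [real_inner_smul_right, real_inner_self_eq_norm_sq]
    _ ≤ ⟪g, x⟫ := hmax hts

theorem inner_neg_of_isMinOn {s : Set E} (hs : s ∈ 𝓝 0) {g x : E} (hg : g ≠ 0)
    (hmin : IsMinOn (⟪g, ·⟫) s x) : ⟪g, x⟫ < 0 := by
  have hmax : IsMaxOn (⟪-g, ·⟫) s x := by simpa only [inner_neg_left] using hmin.neg
  simpa [inner_neg_left] using inner_pos_of_isMaxOn hs (neg_ne_zero.2 hg) hmax

end TrustRegion

section SafetyBiasedCoefficient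

variable {d : ℕ} {gc δr δc : EuclideanSpace ℝ (Fin d)} {ε : ℝ}

theorem mustar_nonneg (hc : ⟪gc, δc⟫ < -ε) : 0 ≤ mustar gc δr δc ε := by
  unfold mustar
  split_ifs with h
  · exact div_nonneg (by linarith [h.2]) (by linarith [h.2])
  · exact le_rfl

theorem mustar_lt_one (hc : ⟪gc, δc⟫ < -ε) : mustar gc δr δc ε < 1 := by
  unfold mustar
  split_ifs with h
  · rw [div_lt_one (by linarith [h.2])]
    linarith
  · exact zero_lt_one

theorem inner_mustar_combination_le (hc : ⟪gc, δc⟫ < -ε) :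
    ⟪gc, (1 - mustar gc δr δc ε) • δr + mustar gc δr δc ε • δc⟫ ≤ -ε := by
  rw [inner_add_right, real_inner_smul_right, real_inner_smul_right]
  unfold mustar
  split_ifs with h
  · have hden : ⟪gc, δr⟫ - ⟪gc, δc⟫ ≠ 0 := by linarith [h.2]
    apply le_of_eq
    rw [show ∀ μ : ℝ, (1 - μ) * ⟪gc, δr⟫ + μ * ⟪gc, δc⟫ =
        ⟪gc, δr⟫ - μ * (⟪gc, δr⟫ - ⟪gc, δc⟫) from fun μ => by ring,
      div_mul_cancel₀ _ hden]
    ring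
  · simp only [sub_zero, one_mul, zero_mul, add_zero]
    by_cases hcr : ⟪gc, δc⟫ = ⟪gc, δr⟫
    · linarith
    · linarith [not_and.1 h hcr]

end SafetyBiasedCoefficient

section FirstOrder

theorem HasDerivAt.eventually_nhdsGT_lt {f : ℝ → ℝ} {f' x : ℝ} (hf : HasDerivAt f f' x)
    (hf' : f' < 0) : ∀ᶠ t in 𝓝[>] x, f t < f x := by
  filter_upwards [hf.hasDerivWithinAt.limsup_slope_le' (lt_irrefl x) hf', self_mem_nhdsWithin]
    with t hslope (ht : x < t)
  rw [slope_def_field, div_neg_iff] at hslope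
  rcases hslope with ⟨-, h⟩ | ⟨h, -⟩ <;> linarith

theorem HasDerivAt.eventually_nhdsGT_gt {f : ℝ → ℝ} {f' x : ℝ} (hf : HasDerivAt f f' x)
    (hf' : 0 < f') : ∀ᶠ t in 𝓝[>] x, f x < f t := by
  simpa using hf.neg.eventually_nhdsGT_lt (neg_neg_of_pos hf')

variable {E : Type*} [NormedAddCommGroup E] [InnerProductSpace ℝ E] [CompleteSpace E]
  {J : E → ℝ} {θ : E}

theorem DifferentiableAt.hasDerivAt_comp_add_smul (hJ : DifferentiableAt ℝ J θ) (v : E) :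
    HasDerivAt (fun t : ℝ => J (θ + t • v)) ⟪gradient J θ, v⟫ 0 :=
  hJ.hasGradientAt.hasFDerivAt.hasLineDerivAt v

end FirstOrder

theorem stmt12_general {d : ℕ} (F : Matrix (Fin d) (Fin d) ℝ)
    (εKL : ℝ) (hεKL : 0 < εKL) (θ : EuclideanSpace ℝ (Fin d))
    (β : ℝ) (hβ0 : 0 < β) (hβ1 : β < 1)
    (Jr Jc : EuclideanSpace ℝ (Fin d) → ℝ)
    (hJr : Differentiable ℝ Jr) (hJc : Differentiable ℝ Jc)
    (gr gc : EuclideanSpace ℝ (Fin d))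
    (hgr : gradient Jr θ = gr) (hgc : gradient Jc θ = gc)
    (hgr0 : gr ≠ 0) (hgc0 : gc ≠ 0)
    (δr δc : EuclideanSpace ℝ (Fin d))
    (hmax : ∀ δ : EuclideanSpace ℝ (Fin d),
      (1/2) * ⟪δ, Matrix.toEuclideanLin F δ⟫ ≤ εKL → ⟪gr, δ⟫ ≤ ⟪gr, δr⟫)
    (hmin : ∀ δ : EuclideanSpace ℝ (Fin d),
      (1/2) * ⟪δ, Matrix.toEuclideanLin F δ⟫ ≤ εKL → ⟪gc, δc⟫ ≤ ⟪gc, δ⟫)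
    (halign : 0 ≤ ⟪gr, δc⟫)
    (δ : EuclideanSpace ℝ (Fin d))
    (hδ : δ = (1 - mustar gc δr δc (-β * ⟪gc, δc⟫)) • δr
            + mustar gc δr δc (-β * ⟪gc, δc⟫) • δc) :
    ∃ α ∈ Set.Ioc (0:ℝ) 1, Jc (θ + α • δ) < Jc θ ∧ Jr θ < Jr (θ + α • δ) := by
  have hT := setOf_half_inner_le_mem_nhds_zero (Matrix.toEuclideanLin F) hεKL
  have hr : 0 < ⟪gr, δr⟫ := inner_pos_of_isMaxOn hT hgr0 (isMaxOn_iff.2 hmax)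
  have hc : ⟪gc, δc⟫ < 0 := inner_neg_of_isMinOn hT hgc0 (isMinOn_iff.2 hmin)
  have hε : 0 < -β * ⟪gc, δc⟫ := by nlinarith
  have hcε : ⟪gc, δc⟫ < -(-β * ⟪gc, δc⟫) := by nlinarith
  have hμ0 := mustar_nonneg (δr := δr) hcε
  have hμ1 := mustar_lt_one (δr := δr) hcε
  have hdescent : ⟪gradient Jc θ, δ⟫ < 0 := by
    rw [hgc, hδ]
    linarith [inner_mustar_combination_le (δr := δr) hcε]
  have hascent : 0 < ⟪gradient Jr θ, δ⟫ := by
    rw [hgr, hδ, inner_add_right, real_inner_smul_right, real_inner_smul_right]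
    nlinarith
  have hsmall : ∀ᶠ α in 𝓝[>] (0 : ℝ),
      α ∈ Set.Ioc 0 1 ∧ Jc (θ + α • δ) < Jc θ ∧ Jr θ < Jr (θ + α • δ) := by
    filter_upwards [Ioc_mem_nhdsGT zero_lt_one,
      ((hJc θ).hasDerivAt_comp_add_smul δ).eventually_nhdsGT_lt hdescent,
      ((hJr θ).hasDerivAt_comp_add_smul δ).eventually_nhdsGT_gt hascent] with α hα hJc' hJr'
    exact ⟨hα, by simpa using hJc', by simpa using hJr'⟩
  obtain ⟨α, hα⟩ := hsmall.exists
  exact ⟨α, hα⟩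

/-- simultaneous improvement: with `F` symmetric positive
definite, `ε_KL > 0`, `β ∈ (0,1)`, `g_r := ∇J_r(θ) ≠ 0`, `g_c := ∇J_c(θ) ≠ 0`,
both gradients Lipschitz on the closed ball of radius `M := max(‖δ_r‖,‖δ_c‖)`
around `θ`, `δ_r` maximizing `⟨g_r,·⟩` over `T`, `δ_c` minimizing `⟨g_c,·⟩`
over `T`, `⟨g_r,δ_c⟩ ≥ 0`, `ε := −β⟨g_c,δ_c⟩` and `δ := (1−μ*)δ_r + μ*δ_c`,
there exists `α ∈ (0,1]` with both `J_c(θ + αδ) < J_c(θ)` and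
`J_r(θ + αδ) > J_r(θ)`. -/
theorem stmt12 {d : ℕ} (F : Matrix (Fin d) (Fin d) ℝ) (hF : F.PosDef)
    (εKL : ℝ) (hεKL : 0 < εKL) (θ : EuclideanSpace ℝ (Fin d))
    (β : ℝ) (hβ0 : 0 < β) (hβ1 : β < 1)
    (Jr Jc : EuclideanSpace ℝ (Fin d) → ℝ)
    (hJr : Differentiable ℝ Jr) (hJc : Differentiable ℝ Jc)
    (gr gc : EuclideanSpace ℝ (Fin d))
    (hgr : gradient Jr θ = gr) (hgc : gradient Jc θ = gc)
    (hgr0 : gr ≠ 0) (hgc0 : gc ≠ 0)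
    (δr δc : EuclideanSpace ℝ (Fin d)) (Lr Lc : NNReal)
    (hLipr : LipschitzOnWith Lr (gradient Jr) (Metric.closedBall θ (max ‖δr‖ ‖δc‖)))
    (hLipc : LipschitzOnWith Lc (gradient Jc) (Metric.closedBall θ (max ‖δr‖ ‖δc‖)))
    (hδr : (1/2) * ⟪δr, Matrix.toEuclideanLin F δr⟫ ≤ εKL)
    (hmax : ∀ δ : EuclideanSpace ℝ (Fin d),
      (1/2) * ⟪δ, Matrix.toEuclideanLin F δ⟫ ≤ εKL → ⟪gr, δ⟫ ≤ ⟪gr, δr⟫)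
    (hδc : (1/2) * ⟪δc, Matrix.toEuclideanLin F δc⟫ ≤ εKL)
    (hmin : ∀ δ : EuclideanSpace ℝ (Fin d),
      (1/2) * ⟪δ, Matrix.toEuclideanLin F δ⟫ ≤ εKL → ⟪gc, δc⟫ ≤ ⟪gc, δ⟫)
    (halign : 0 ≤ ⟪gr, δc⟫)
    (δ : EuclideanSpace ℝ (Fin d))
    (hδ : δ = (1 - mustar gc δr δc (-β * ⟪gc, δc⟫)) • δr
            + mustar gc δr δc (-β * ⟪gc, δc⟫) • δc) :
    ∃ α ∈ Set.Ioc (0:ℝ) 1, Jc (θ + α • δ) < Jc θ ∧ Jr θ < Jr (θ + α • δ) :=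
  stmt12_general F εKL hεKL θ β hβ0 hβ1 Jr Jc hJr hJc gr gc hgr hgc hgr0 hgc0 δr δc hmax hmin halign
    δ hδ
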